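/- Let B be a Segal algebra on ℝ^d that is strongly character invariant, i.e., for every s ∈ ℝ^d and f ∈ B the pointwise product χ_s·f belongs to B with ‖χ_s·f‖_B = ‖f‖_B, where χ_s(x) := e^{2πi⟨s, x⟩}. Then B is a pointwise Banach module over the Fourier algebra 𝓕L¹(ℝ^d): for every g ∈ L¹(ℝ^d) and f ∈ B, the pointwise product ǧ·f belongs to B and ‖ǧ·f‖_B ≤ ‖g‖_{L¹}·‖f‖_B, where ǧ(x) := ∫_{ℝ^d} g(s) e^{2πi⟨s, x⟩} ds. -/

import Mathlib

/-!
Once `s ↦ M_s f` is continuous, `ǧ · f` is the Bochner integral `∫ g(s) • M_s f ds` in `B`,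
whose norm is at most `‖g‖₁ ‖f‖_B` because every `M_s` is an isometry.

Continuity is the real work. The `M_s` are equicontinuous, so it suffices to check continuity at
`0` on a dense set. By density of `B` in `L¹` and an approximate identity, the convolution products
`e ⋆ z = ∫ e(a) T_a z da` with `e, z ∈ B` are dense. Since `M_s (e ⋆ z) = (χ_s e) ⋆ M_s z` and
`e ⋆ w = w ⋆ e`,
`M_s (e ⋆ z) - e ⋆ z = ((χ_s - 1) e) ⋆ M_s z + ((χ_s - 1) z) ⋆ e`,
whose norm is at most `‖(χ_s - 1) e‖₁ ‖z‖_B + ‖(χ_s - 1) z‖₁ ‖e‖_B`, which tends to `0` by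
dominated convergence.
-/

open MeasureTheory Real

/-- The character `χ_s(t) = e^{2πi⟨s,t⟩}` of `ℝ^d`. -/
noncomputable def character {d : ℕ} (s t : Fin d → ℝ) : ℂ :=
  Complex.exp (2 * Real.pi * Complex.I * (∑ i, s i * t i))

open Filter Topology

section Character

variable {d : ℕ}

lemma norm_character (s t : Fin d → ℝ) : ‖character s t‖ = 1 := by
  rw [character, show 2 * (π : ℂ) * Complex.I * ((∑ i, s i * t i : ℝ) : ℂ)
      = ((2 * π * ∑ i, s i * t i : ℝ) : ℂ) * Complex.I by push_cast; ring]
  exact Complex.norm_exp_ofReal_mul_I _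

lemma character_zero_left (t : Fin d → ℝ) : character 0 t = 1 := by
  simp [character]

lemma character_add_left (s s' t : Fin d → ℝ) :
    character (s + s') t = character s t * character s' t := by
  simp only [character, ← Complex.exp_add, Pi.add_apply, add_mul, Finset.sum_add_distrib]
  push_cast
  ring_nf

lemma character_add_right (s t t' : Fin d → ℝ) :
    character s (t + t') = character s t * character s t' := by
  simp only [character, ← Complex.exp_add, Pi.add_apply, mul_add, Finset.sum_add_distrib]
  push_cast
  ring_nf

lemma continuous_character :
    Continuous fun p : (Fin d → ℝ) × (Fin d → ℝ) => character p.1 p.2 := by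
  unfold character
  fun_prop

lemma tendsto_integral_norm_character_sub_one_mul {f : (Fin d → ℝ) → ℂ} (hf : Integrable f) :
    Tendsto (fun s => ∫ t, ‖character s t - 1‖ * ‖f t‖) (𝓝 0) (𝓝 0) := by
  have hcont : Continuous fun s => ∫ t, ‖character s t - 1‖ * ‖f t‖ := by
    refine continuous_of_dominated (bound := fun t => 2 * ‖f t‖)
      (fun s => ?_) (fun s => Eventually.of_forall fun t => ?_) (hf.norm.const_mul 2)
      (Eventually.of_forall fun t => ?_)
    · exact ((continuous_character.comp (Continuous.prodMk_right s)).sub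
        continuous_const).norm.aestronglyMeasurable.mul hf.1.norm
    · rw [norm_mul, norm_norm, norm_norm]
      gcongr
      calc ‖character s t - 1‖ ≤ ‖character s t‖ + ‖(1 : ℂ)‖ := norm_sub_le _ _
        _ = 2 := by rw [norm_character, norm_one]; norm_num
    · exact ((continuous_character.comp (Continuous.prodMk_left t)).sub
        continuous_const).norm.mul continuous_const
  simpa [character_zero_left] using hcont.tendsto 0

lemma integrable_character_mul {f : (Fin d → ℝ) → ℂ} (hf : Integrable f) (s : Fin d → ℝ) :
    Integrable fun t => character s t * f t :=
  hf.bdd_mul (continuous_character.comp (Continuous.prodMk_right s)).aestronglyMeasurable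
    (Eventually.of_forall fun t => (norm_character s t).le)

variable {g : (Fin d → ℝ) → ℂ}

lemma norm_integral_mul_character_le (t : Fin d → ℝ) :
    ‖∫ s, g s * character s t‖ ≤ ∫ s, ‖g s‖ :=
  (norm_integral_le_integral_norm _).trans_eq <| by simp only [norm_mul, norm_character, mul_one]

lemma continuous_integral_mul_character (hg : Integrable g) :
    Continuous fun t => ∫ s, g s * character s t :=
  continuous_of_dominated
    (fun t => hg.1.mul (continuous_character.comp (Continuous.prodMk_left t)).aestronglyMeasurable)
    (fun t => Eventually.of_forall fun s => by rw [norm_mul, norm_character, mul_one])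
    hg.norm
    (Eventually.of_forall fun s => continuous_const.mul
      (continuous_character.comp (Continuous.prodMk_right s)))

lemma integral_mul_setIntegral_character_mul (hg : Integrable g) {f : (Fin d → ℝ) → ℂ}
    (hf : Integrable f) (A : Set (Fin d → ℝ)) :
    ∫ s, g s * ∫ t in A, character s t * f t = ∫ t in A, (∫ s, g s * character s t) * f t := by
  have hprod : Integrable (Function.uncurry fun s t => g s * (character s t * f t))
      (volume.prod (volume.restrict A)) := by
    refine (hg.norm.mul_prod hf.norm.restrict).mono' ?_
      (Eventually.of_forall fun p => ?_)
    · exact (hg.1.comp_quasiMeasurePreserving Measure.quasiMeasurePreserving_fst).mul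
        (continuous_character.aestronglyMeasurable.mul
          (hf.1.restrict.comp_quasiMeasurePreserving Measure.quasiMeasurePreserving_snd))
    · simp only [Function.uncurry, norm_mul, norm_character, one_mul, le_refl]
  calc ∫ s, g s * ∫ t in A, character s t * f t
      = ∫ s, ∫ t in A, g s * (character s t * f t) := by simp only [integral_const_mul]
    _ = ∫ t in A, ∫ s, g s * (character s t * f t) := integral_integral_swap hprod
    _ = ∫ t in A, (∫ s, g s * character s t) * f t := by
        simp only [← mul_assoc, integral_mul_const]

end Character

section SmulIntegral

variable {α E : Type*} [MeasurableSpace α] {μ : Measure α} [NormedAddCommGroup E]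
  [NormedSpace ℂ E] {v : α → ℂ} {F : α → E} {C : ℝ}

lemma integrable_smul_of_norm_le (hv : Integrable v μ) (hF : AEStronglyMeasurable F μ)
    (hFC : ∀ a, ‖F a‖ ≤ C) : Integrable (fun a => v a • F a) μ :=
  hv.smul_of_top_left (memLp_top_of_bound hF C (Eventually.of_forall hFC))

lemma norm_integral_smul_le (hv : Integrable v μ) (hFC : ∀ a, ‖F a‖ ≤ C) :
    ‖∫ a, v a • F a ∂μ‖ ≤ (∫ a, ‖v a‖ ∂μ) * C := by
  rw [← integral_mul_const]
  refine norm_integral_le_of_norm_le (hv.norm.mul_const C) (Eventually.of_forall fun a => ?_)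
  rw [norm_smul]
  exact mul_le_mul_of_nonneg_left (hFC a) (norm_nonneg _)

end SmulIntegral

section SetIntegral

variable {α β E : Type*} [MeasurableSpace α] [MeasurableSpace β] {μ : Measure α} {ν : Measure β}
  [NormedAddCommGroup E] [NormedSpace ℂ E] {j : E →ₗ[ℂ] (α → ℂ)}

lemma exists_clm_eq_setIntegral (hint : ∀ x, Integrable (j x) μ) {C : ℝ}
    (hC : ∀ x, ∫ t, ‖j x t‖ ∂μ ≤ C * ‖x‖) (A : Set α) :
    ∃ Λ : E →L[ℂ] ℂ, ∀ x, Λ x = ∫ t in A, j x t ∂μ := by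
  let Λ : E →ₗ[ℂ] ℂ :=
    { toFun := fun x => ∫ t in A, j x t ∂μ
      map_add' := fun x y => by
        simp only [map_add, Pi.add_apply]
        exact integral_add (hint x).integrableOn (hint y).integrableOn
      map_smul' := fun c x => by
        simp only [map_smul, Pi.smul_apply, smul_eq_mul, RingHom.id_apply]
        exact integral_const_mul c _ }
  refine ⟨Λ.mkContinuous C fun x => ?_, fun x => rfl⟩
  calc ‖∫ t in A, j x t ∂μ‖ ≤ ∫ t in A, ‖j x t‖ ∂μ := norm_integral_le_integral_norm _
    _ ≤ ∫ t, ‖j x t‖ ∂μ :=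
        setIntegral_le_integral (hint x).norm (Eventually.of_forall fun t => norm_nonneg _)
    _ ≤ C * ‖x‖ := hC x

lemma setIntegral_apply_integral [CompleteSpace E] (hint : ∀ x, Integrable (j x) μ) {C : ℝ}
    (hC : ∀ x, ∫ t, ‖j x t‖ ∂μ ≤ C * ‖x‖) {G : β → E} (hG : Integrable G ν) (A : Set α) :
    ∫ t in A, j (∫ a, G a ∂ν) t ∂μ = ∫ a, ∫ t in A, j (G a) t ∂μ ∂ν := by
  obtain ⟨Λ, hΛ⟩ := exists_clm_eq_setIntegral hint hC A
  simp only [← hΛ]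
  exact (Λ.integral_comp_comm hG).symm

end SetIntegral

section Convolution

variable {d : ℕ} {E : Type*} [NormedAddCommGroup E] [NormedSpace ℂ E]
  {T : (Fin d → ℝ) → E →ₗ[ℂ] E} {v w : (Fin d → ℝ) → ℂ}

noncomputable def convAct (T : (Fin d → ℝ) → E →ₗ[ℂ] E) (v : (Fin d → ℝ) → ℂ) (z : E) : E :=
  ∫ a, v a • T a z

lemma integrable_smul_translate (hTiso : ∀ a x, ‖T a x‖ = ‖x‖)
    (hTcont : ∀ x, Continuous fun a => T a x) (hv : Integrable v) (z : E) :
    Integrable fun a => v a • T a z :=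
  integrable_smul_of_norm_le hv (hTcont z).aestronglyMeasurable fun a => (hTiso a z).le

lemma norm_convAct_le (hTiso : ∀ a x, ‖T a x‖ = ‖x‖) (hv : Integrable v) (z : E) :
    ‖convAct T v z‖ ≤ (∫ a, ‖v a‖) * ‖z‖ :=
  norm_integral_smul_le hv fun a => (hTiso a z).le

lemma convAct_sub_left (hTiso : ∀ a x, ‖T a x‖ = ‖x‖) (hTcont : ∀ x, Continuous fun a => T a x)
    (hv : Integrable v) (hw : Integrable w) (z : E) :
    convAct T (v - w) z = convAct T v z - convAct T w z := by
  simp only [convAct, Pi.sub_apply, sub_smul]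
  exact integral_sub (integrable_smul_translate hTiso hTcont hv z)
    (integrable_smul_translate hTiso hTcont hw z)

lemma convAct_sub_right (hTiso : ∀ a x, ‖T a x‖ = ‖x‖) (hTcont : ∀ x, Continuous fun a => T a x)
    (hv : Integrable v) (z w : E) :
    convAct T v (z - w) = convAct T v z - convAct T v w := by
  simp only [convAct, map_sub, smul_sub]
  exact integral_sub (integrable_smul_translate hTiso hTcont hv z)
    (integrable_smul_translate hTiso hTcont hv w)

variable {j : E →ₗ[ℂ] ((Fin d → ℝ) → ℂ)} {M : (Fin d → ℝ) → E →ₗ[ℂ] E}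

lemma translation_zero_apply (hinj : ∀ x y, j x =ᵐ[volume] j y → x = y)
    (hT : ∀ a x, j (T a x) =ᵐ[volume] fun t => j x (t - a)) (x : E) : T 0 x = x :=
  hinj _ _ <| (hT 0 x).trans <| Eventually.of_forall fun t => by simp

lemma modulation_modulation (hinj : ∀ x y, j x =ᵐ[volume] j y → x = y)
    (hM : ∀ s x, j (M s x) =ᵐ[volume] fun t => character s t * j x t) (s s' : Fin d → ℝ) (z : E) :
    M s (M s' z) = M (s + s') z := by
  refine hinj _ _ ?_
  filter_upwards [hM s (M s' z), hM s' z, hM (s + s') z] with t h h' h''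
  rw [h, h', h'', ← mul_assoc, character_add_left]

lemma modulation_translation (hinj : ∀ x y, j x =ᵐ[volume] j y → x = y)
    (hT : ∀ a x, j (T a x) =ᵐ[volume] fun t => j x (t - a))
    (hM : ∀ s x, j (M s x) =ᵐ[volume] fun t => character s t * j x t) (s a : Fin d → ℝ) (z : E) :
    M s (T a z) = character s a • T a (M s z) := by
  refine hinj _ _ ?_
  have hMa : (fun t => j (M s z) (t - a)) =ᵐ[volume] fun t => character s (t - a) * j z (t - a) :=
    (measurePreserving_sub_right volume a).quasiMeasurePreserving.ae_eq_comp (hM s z)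
  filter_upwards [hM s (T a z), hT a z, hT a (M s z), hMa] with t h1 h2 h3 h4
  rw [h1, map_smul, Pi.smul_apply, smul_eq_mul, h3, h4, h2, ← mul_assoc, ← character_add_right,
    add_sub_cancel]

lemma exists_norm_convAct_sub_self_le [CompleteSpace E] (hinj : ∀ x y, j x =ᵐ[volume] j y → x = y)
    (hT : ∀ a x, j (T a x) =ᵐ[volume] fun t => j x (t - a)) (hTiso : ∀ a x, ‖T a x‖ = ‖x‖)
    (hTcont : ∀ x, Continuous fun a => T a x) (x : E) {ε : ℝ} (hε : 0 < ε) :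
    ∃ v, Integrable v ∧ ‖convAct T v x - x‖ ≤ ε := by
  obtain ⟨r, hr, hball⟩ := Metric.continuousAt_iff.1 (hTcont x).continuousAt ε hε
  let φ : ContDiffBump (0 : Fin d → ℝ) := ⟨r / 2, r, by positivity, by linarith⟩
  set u := φ.normed volume
  have hu0 : ∀ a, 0 ≤ u a := φ.nonneg_normed
  have hu : Integrable fun a => (u a : ℂ) := φ.integrable_normed.ofReal
  refine ⟨fun a => (u a : ℂ), hu, ?_⟩
  have hsub : convAct T (fun a => (u a : ℂ)) x - x = ∫ a, (u a : ℂ) • (T a x - x) := by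
    simp only [smul_sub]
    rw [integral_sub (integrable_smul_translate hTiso hTcont hu x) (hu.smul_const x),
      integral_smul_const, integral_complex_ofReal, φ.integral_normed, Complex.ofReal_one,
      one_smul, convAct]
  have hpointwise : ∀ a, ‖(u a : ℂ) • (T a x - x)‖ ≤ u a * ε := by
    intro a
    rw [norm_smul, Complex.norm_real, Real.norm_of_nonneg (hu0 a)]
    by_cases hua : u a = 0
    · rw [hua, zero_mul, zero_mul]
    have ha : a ∈ Metric.ball 0 r := φ.support_normed_eq (μ := volume) ▸ hua
    refine mul_le_mul_of_nonneg_left ?_ (hu0 a)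
    have := hball ha
    rw [translation_zero_apply hinj hT, dist_eq_norm] at this
    exact this.le
  calc ‖convAct T (fun a => (u a : ℂ)) x - x‖
      ≤ ∫ a, u a * ε := hsub ▸ norm_integral_le_of_norm_le (φ.integrable_normed.mul_const ε)
        (Eventually.of_forall hpointwise)
    _ = ε := by rw [integral_mul_const, φ.integral_normed, one_mul]

end Convolution

section SegalAlgebra

variable {d : ℕ} {E : Type*} [NormedAddCommGroup E] [NormedSpace ℂ E] [CompleteSpace E]
  {j : E →ₗ[ℂ] ((Fin d → ℝ) → ℂ)} {T M : (Fin d → ℝ) → E →ₗ[ℂ] E} {C : ℝ}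

lemma dense_setOf_convAct (hinj : ∀ x y, j x =ᵐ[volume] j y → x = y)
    (hdense : ∀ g : (Fin d → ℝ) → ℂ, Integrable g volume →
      ∀ ε : ℝ, 0 < ε → ∃ x : E, ∫ t, ‖j x t - g t‖ < ε)
    (hint : ∀ x, Integrable (j x)) (hT : ∀ a x, j (T a x) =ᵐ[volume] fun t => j x (t - a))
    (hTiso : ∀ a x, ‖T a x‖ = ‖x‖) (hTcont : ∀ x, Continuous fun a => T a x) :
    Dense {y : E | ∃ e z, convAct T (j e) z = y} := by
  rw [Metric.dense_iff]
  intro x ε hε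
  obtain ⟨v, hv, hvx⟩ := exists_norm_convAct_sub_self_le hinj hT hTiso hTcont x (half_pos hε)
  obtain ⟨e, he⟩ := hdense v hv (ε / 2 / (‖x‖ + 1)) (by positivity)
  have hex : (∫ t, ‖(j e - v) t‖) * ‖x‖ < ε / 2 :=
    calc (∫ t, ‖(j e - v) t‖) * ‖x‖ ≤ (∫ t, ‖(j e - v) t‖) * (‖x‖ + 1) :=
          mul_le_mul_of_nonneg_left (by linarith) (integral_nonneg fun _ => norm_nonneg _)
      _ < ε / 2 := (lt_div_iff₀ (by positivity)).1 he
  refine ⟨convAct T (j e) x, ?_, e, x, rfl⟩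
  rw [Metric.mem_ball, dist_eq_norm]
  calc ‖convAct T (j e) x - x‖ = ‖convAct T (j e - v) x + (convAct T v x - x)‖ := by
        rw [convAct_sub_left hTiso hTcont (hint e) hv]
        abel_nf
    _ ≤ (∫ t, ‖(j e - v) t‖) * ‖x‖ + ε / 2 :=
        (norm_add_le _ _).trans (add_le_add (norm_convAct_le hTiso ((hint e).sub hv) x) hvx)
    _ < ε := by linarith

lemma setIntegral_convAct (hint : ∀ x, Integrable (j x)) (hC : ∀ x, ∫ t, ‖j x t‖ ≤ C * ‖x‖)
    (hT : ∀ a x, j (T a x) =ᵐ[volume] fun t => j x (t - a)) (hTiso : ∀ a x, ‖T a x‖ = ‖x‖)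
    (hTcont : ∀ x, Continuous fun a => T a x) {v : (Fin d → ℝ) → ℂ} (hv : Integrable v) (z : E)
    {A : Set (Fin d → ℝ)} (hA : MeasurableSet A) :
    ∫ t in A, j (convAct T v z) t = ∫ t in A, ∫ a, v a * j z (t - a) := by
  have hprod : Integrable (Function.uncurry fun a t => v a * j z (t - a))
      (volume.prod (volume.restrict A)) := by
    rw [show volume.prod (volume.restrict A) = (volume.prod volume).restrict (Set.univ ×ˢ A) by
      rw [← Measure.prod_restrict, Measure.restrict_univ]]
    exact (hv.convolution_integrand (ContinuousLinearMap.mul ℂ ℂ) (hint z)).swap.restrict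
  rw [convAct, setIntegral_apply_integral hint hC (integrable_smul_translate hTiso hTcont hv z)]
  calc ∫ a, ∫ t in A, j (v a • T a z) t = ∫ a, ∫ t in A, v a * j z (t - a) := by
        refine integral_congr_ae (Eventually.of_forall fun a => ?_)
        simp only [map_smul, Pi.smul_apply, smul_eq_mul, integral_const_mul]
        rw [setIntegral_congr_ae hA ((hT a z).mono fun t ht _ => ht)]
    _ = ∫ t in A, ∫ a, v a * j z (t - a) := integral_integral_swap hprod

lemma convAct_comm (hinj : ∀ x y, j x =ᵐ[volume] j y → x = y) (hint : ∀ x, Integrable (j x))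
    (hC : ∀ x, ∫ t, ‖j x t‖ ≤ C * ‖x‖) (hT : ∀ a x, j (T a x) =ᵐ[volume] fun t => j x (t - a))
    (hTiso : ∀ a x, ‖T a x‖ = ‖x‖) (hTcont : ∀ x, Continuous fun a => T a x) (e w : E) :
    convAct T (j e) w = convAct T (j w) e := by
  refine hinj _ _ ((hint _).ae_eq_of_forall_setIntegral_eq _ _ (hint _) fun A hA _ => ?_)
  rw [setIntegral_convAct hint hC hT hTiso hTcont (hint e) w hA,
    setIntegral_convAct hint hC hT hTiso hTcont (hint w) e hA]
  refine setIntegral_congr_fun hA fun t _ => ?_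
  rw [← integral_sub_left_eq_self _ volume t]
  simp only [sub_sub_cancel, mul_comm]

lemma modulation_convAct (hinj : ∀ x y, j x =ᵐ[volume] j y → x = y)
    (hT : ∀ a x, j (T a x) =ᵐ[volume] fun t => j x (t - a))
    (hM : ∀ s x, j (M s x) =ᵐ[volume] fun t => character s t * j x t)
    (hMiso : ∀ s x, ‖M s x‖ = ‖x‖) (s : Fin d → ℝ) (v : (Fin d → ℝ) → ℂ) (z : E) :
    M s (convAct T v z) = convAct T (fun a => character s a * v a) (M s z) := by
  let Ms : E →ₗᵢ[ℂ] E := { toLinearMap := M s, norm_map' := hMiso s }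
  calc M s (convAct T v z) = ∫ a, Ms (v a • T a z) := (Ms.integral_comp_comm _).symm
    _ = convAct T (fun a => character s a * v a) (M s z) := by
        simp only [Ms, LinearIsometry.coe_mk, map_smul, modulation_translation hinj hT hM,
          smul_smul, mul_comm, convAct]

lemma tendsto_modulation_convAct (hinj : ∀ x y, j x =ᵐ[volume] j y → x = y)
    (hint : ∀ x, Integrable (j x)) (hC : ∀ x, ∫ t, ‖j x t‖ ≤ C * ‖x‖)
    (hT : ∀ a x, j (T a x) =ᵐ[volume] fun t => j x (t - a)) (hTiso : ∀ a x, ‖T a x‖ = ‖x‖)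
    (hTcont : ∀ x, Continuous fun a => T a x)
    (hM : ∀ s x, j (M s x) =ᵐ[volume] fun t => character s t * j x t)
    (hMiso : ∀ s x, ‖M s x‖ = ‖x‖) (e z : E) :
    Tendsto (fun s => M s (convAct T (j e) z)) (𝓝 0) (𝓝 (convAct T (j e) z)) := by
  have hdecomp : ∀ s, M s (convAct T (j e) z) - convAct T (j e) z =
      convAct T ((fun a => character s a * j e a) - j e) (M s z) + convAct T (j (M s z - z)) e := by
    intro s
    rw [modulation_convAct hinj hT hM hMiso, ← convAct_comm hinj hint hC hT hTiso hTcont e,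
      convAct_sub_right hTiso hTcont (hint e),
      convAct_sub_left hTiso hTcont (integrable_character_mul (hint e) s) (hint e)]
    abel
  have hbound : ∀ s, ‖M s (convAct T (j e) z) - convAct T (j e) z‖ ≤
      (∫ a, ‖character s a - 1‖ * ‖j e a‖) * ‖z‖ + (∫ t, ‖character s t - 1‖ * ‖j z t‖) * ‖e‖ := by
    intro s
    rw [hdecomp]
    refine (norm_add_le _ _).trans (add_le_add ?_ ?_)
    · calc _ ≤ (∫ a, ‖((fun a => character s a * j e a) - j e) a‖) * ‖M s z‖ :=
            norm_convAct_le hTiso ((integrable_character_mul (hint e) s).sub (hint e)) (M s z)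
        _ = _ := by simp only [Pi.sub_apply, ← sub_one_mul, norm_mul, hMiso]
    · calc _ ≤ (∫ t, ‖j (M s z - z) t‖) * ‖e‖ := norm_convAct_le hTiso (hint _) e
        _ = _ := by
          congr 1
          refine integral_congr_ae ?_
          filter_upwards [hM s z] with t ht
          rw [map_sub, Pi.sub_apply, ht, ← sub_one_mul, norm_mul]
  rw [tendsto_iff_norm_sub_tendsto_zero]
  refine squeeze_zero (fun _ => norm_nonneg _) hbound ?_
  simpa using ((tendsto_integral_norm_character_sub_one_mul (hint e)).mul_const ‖z‖).add
    ((tendsto_integral_norm_character_sub_one_mul (hint z)).mul_const ‖e‖)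

lemma continuous_modulation (hinj : ∀ x y, j x =ᵐ[volume] j y → x = y)
    (hdense : ∀ g : (Fin d → ℝ) → ℂ, Integrable g volume →
      ∀ ε : ℝ, 0 < ε → ∃ x : E, ∫ t, ‖j x t - g t‖ < ε)
    (hint : ∀ x, Integrable (j x)) (hC : ∀ x, ∫ t, ‖j x t‖ ≤ C * ‖x‖)
    (hT : ∀ a x, j (T a x) =ᵐ[volume] fun t => j x (t - a)) (hTiso : ∀ a x, ‖T a x‖ = ‖x‖)
    (hTcont : ∀ x, Continuous fun a => T a x)
    (hM : ∀ s x, j (M s x) =ᵐ[volume] fun t => character s t * j x t)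
    (hMiso : ∀ s x, ‖M s x‖ = ‖x‖) (x : E) :
    Continuous fun s => M s x := by
  have hlip : ∀ s, LipschitzWith 1 (M s) := fun s =>
    (AddMonoidHomClass.isometry_of_norm (M s) (hMiso s)).lipschitz
  have hclosed : IsClosed {y : E | Tendsto (fun s => M s y) (𝓝 0) (𝓝 y)} :=
    (LipschitzWith.uniformEquicontinuous _ 1 hlip).equicontinuous.isClosed_setOfPred_tendsto
      continuous_id
  have hzero : Tendsto (fun s => M s x) (𝓝 0) (𝓝 x) := by
    refine hclosed.closure_subset_iff.2 ?_
      ((dense_setOf_convAct hinj hdense hint hT hTiso hTcont).closure_eq ▸ Set.mem_univ x)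
    rintro _ ⟨e, z, rfl⟩
    exact tendsto_modulation_convAct hinj hint hC hT hTiso hTcont hM hMiso e z
  refine continuous_iff_continuousAt.2 fun s₀ => ?_
  have hshift : Tendsto (fun s => M s₀ (M (s - s₀) x)) (𝓝 s₀) (𝓝 (M s₀ x)) :=
    ((hlip s₀).continuous.tendsto _).comp
      (hzero.comp ((continuous_sub_right s₀).tendsto' s₀ 0 (sub_self s₀)))
  simpa only [ContinuousAt, modulation_modulation hinj hM, add_sub_cancel] using hshift

lemma ae_eq_integral_smul_modulation (hint : ∀ x, Integrable (j x))
    (hC : ∀ x, ∫ t, ‖j x t‖ ≤ C * ‖x‖)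
    (hM : ∀ s x, j (M s x) =ᵐ[volume] fun t => character s t * j x t)
    (hMiso : ∀ s x, ‖M s x‖ = ‖x‖) {x : E} (hMx : Continuous fun s => M s x)
    {g : (Fin d → ℝ) → ℂ} (hg : Integrable g) :
    j (∫ s, g s • M s x) =ᵐ[volume] fun t => (∫ s, g s * character s t) * j x t := by
  have hgx : Integrable fun s => g s • M s x :=
    integrable_smul_of_norm_le hg hMx.aestronglyMeasurable fun s => (hMiso s x).le
  have hrhs : Integrable fun t => (∫ s, g s * character s t) * j x t :=
    (hint x).bdd_mul (continuous_integral_mul_character hg).aestronglyMeasurable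
      (Eventually.of_forall norm_integral_mul_character_le)
  refine (hint _).ae_eq_of_forall_setIntegral_eq _ _ hrhs fun A hA _ => ?_
  rw [setIntegral_apply_integral hint hC hgx, ← integral_mul_setIntegral_character_mul hg (hint x)]
  refine integral_congr_ae (Eventually.of_forall fun s => ?_)
  simp only [map_smul, Pi.smul_apply, smul_eq_mul, integral_const_mul]
  rw [setIntegral_congr_ae hA ((hM s x).mono fun t ht _ => ht)]

end SegalAlgebra

/-- Let `B` be a strongly character invariant Segal algebra on `ℝ^d`
(modeled as in Statement 15, with character multiplications `M s` acting isometrically).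
Then `B` is a pointwise Banach module over the Fourier algebra `𝓕L¹(ℝ^d)`: for every
`g ∈ L¹(ℝ^d)` and `f ∈ B`, the pointwise product `ǧ · f` (with
`ǧ(t) = ∫ g(s) e^{2πi⟨s,t⟩} ds`) belongs to `B` with `‖ǧ·f‖_B ≤ ‖g‖_{L¹} · ‖f‖_B`. -/
theorem segal_algebra_fourier_module
    {d : ℕ} {E : Type*}
    [NormedAddCommGroup E] [NormedSpace ℂ E] [CompleteSpace E]
    (j : E →ₗ[ℂ] ((Fin d → ℝ) → ℂ))
    (hint : ∀ x : E, Integrable (j x) volume)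
    (hinj : ∀ x y : E, j x =ᵐ[volume] j y → x = y)
    (hemb : ∃ C : ℝ, 0 < C ∧ ∀ x : E, ∫ t, ‖j x t‖ ≤ C * ‖x‖)
    (hdense : ∀ g : (Fin d → ℝ) → ℂ, Integrable g volume →
      ∀ ε : ℝ, 0 < ε → ∃ x : E, ∫ t, ‖j x t - g t‖ < ε)
    (T : (Fin d → ℝ) → E →ₗ[ℂ] E)
    (hT : ∀ (a : Fin d → ℝ) (x : E), j (T a x) =ᵐ[volume] fun t => j x (t - a))
    (hTiso : ∀ (a : Fin d → ℝ) (x : E), ‖T a x‖ = ‖x‖)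
    (hTcont : ∀ x : E, Continuous fun a => T a x)
    (M : (Fin d → ℝ) → E →ₗ[ℂ] E)
    (hM : ∀ (s : Fin d → ℝ) (x : E), j (M s x) =ᵐ[volume] fun t => character s t * j x t)
    (hMiso : ∀ (s : Fin d → ℝ) (x : E), ‖M s x‖ = ‖x‖) :
    ∀ g : (Fin d → ℝ) → ℂ, Integrable g volume →
      ∀ x : E, ∃ y : E,
        (j y =ᵐ[volume] fun t => (∫ s, g s * character s t) * j x t) ∧
        ‖y‖ ≤ (∫ s, ‖g s‖) * ‖x‖ := by
  intro g hg x
  obtain ⟨C, -, hC⟩ := hemb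
  have hMx := continuous_modulation hinj hdense hint hC hT hTiso hTcont hM hMiso x
  exact ⟨∫ s, g s • M s x, ae_eq_integral_smul_modulation hint hC hM hMiso hMx hg,
    norm_integral_smul_le hg fun s => (hMiso s x).le⟩
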